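/- Let g ∈ L^∞(ℝ^N) and h ∈ L^1(ℝ^N), and suppose for some α ≥ 0, b ≥ 0, γ ∈ ℝ that lim_{|x|→∞} g(x) e^{α|x|} |x|^b = γ and ∫ |h(x)| e^{α|x|} |x|^b dx < ∞. Then for every z ∈ ℝ^N \ {0}, lim_{ρ→+∞} ( ∫ g(x + ρz) h(x) dx ) · e^{α|ρz|} |ρz|^b = γ ∫ h(x) e^{-α (x·z)/|z|} dx. -/

import Mathlib

/-!
Write `w(t) = e^{αt} t^b` and `y = x + ρz`. Pointwise in `x`,
`g(y) h(x) w(‖ρz‖) = g(y) w(‖y‖) · (w(‖ρz‖) / w(‖y‖)) · h(x)`: the first factor tends to `γ`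
because `y` escapes to infinity, and the ratio tends to `e^{-α⟪x, z⟫/‖z‖}` because
`‖x + ρz‖ - ‖ρz‖ → ⟪x, z⟫/‖z‖`, the derivative of the norm at `z` in the direction `x`.
For domination, `‖u‖ ≤ ‖x + u‖ + ‖x‖` and `w(s + t) ≤ w(s) w(1 + t)` for `s ≥ 1` bound
`|g(x + u)| w(‖u‖)` by `C w(1 + ‖x‖)` uniformly in `u`, and `|h| w(1 + ‖·‖)` is integrable by the
moment hypothesis on `h`; dominated convergence concludes.
-/

open Real MeasureTheory Filter Topology Bornology

open scoped RealInnerProductSpace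

section NormAsymptotics

variable {E : Type*} [NormedAddCommGroup E] [InnerProductSpace ℝ E] {z : E}

theorem hasDerivAt_norm_add_smul (hz : z ≠ 0) (x : E) :
    HasDerivAt (fun t : ℝ => ‖z + t • x‖) (⟪x, z⟫ / ‖z‖) 0 := by
  have hsq : HasDerivAt (fun t : ℝ => ‖z + t • x‖ ^ 2) (2 * ⟪z, x⟫) 0 := by
    simpa using (((hasDerivAt_id (0 : ℝ)).smul_const x).const_add z).norm_sq
  have hsqrt := hsq.sqrt (by simpa using hz)
  simp only [sqrt_sq (norm_nonneg _), zero_smul, add_zero] at hsqrt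
  convert hsqrt using 1
  rw [real_inner_comm]
  field_simp

theorem tendsto_norm_add_smul_sub_norm_smul (hz : z ≠ 0) (x : E) :
    Tendsto (fun ρ : ℝ => ‖x + ρ • z‖ - ‖ρ • z‖) atTop (𝓝 (⟪x, z⟫ / ‖z‖)) := by
  refine ((hasDerivAt_norm_add_smul hz x).tendsto_slope_zero_right.comp
    tendsto_inv_atTop_nhdsGT_zero).congr' ?_
  filter_upwards [eventually_gt_atTop 0] with ρ hρ
  have hρz : ρ • (z + ρ⁻¹ • x) = x + ρ • z := by
    rw [smul_add, smul_inv_smul₀ hρ.ne', add_comm]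
  simp only [Function.comp_apply, zero_add, inv_inv, smul_eq_mul, mul_sub]
  rw [← hρz, norm_smul, norm_smul, norm_of_nonneg hρ.le]
  simp

theorem tendsto_norm_add_smul_atTop (hz : z ≠ 0) (x : E) :
    Tendsto (fun ρ : ℝ => ‖x + ρ • z‖) atTop atTop := by
  have hsmul : Tendsto (fun ρ : ℝ => ‖ρ • z‖) atTop atTop := by
    refine (tendsto_id.atTop_mul_const (norm_pos_iff.2 hz)).congr' ?_
    filter_upwards [eventually_ge_atTop 0] with ρ hρ
    rw [norm_smul, norm_of_nonneg hρ, id]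
  simpa using (tendsto_norm_add_smul_sub_norm_smul hz x).add_atTop hsmul

theorem tendsto_norm_smul_div_norm_add_smul (hz : z ≠ 0) (x : E) :
    Tendsto (fun ρ : ℝ => ‖ρ • z‖ / ‖x + ρ • z‖) atTop (𝓝 1) := by
  have hlarge := tendsto_norm_add_smul_atTop hz x
  have hsmall := (tendsto_norm_add_smul_sub_norm_smul hz x).div_atTop hlarge
  have hlim := hsmall.const_sub 1
  rw [sub_zero] at hlim
  refine hlim.congr' ?_
  filter_upwards [hlarge.eventually_gt_atTop 0] with ρ hρ
  field_simp
  ring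

end NormAsymptotics

noncomputable def expWeight (α b t : ℝ) : ℝ := exp (α * t) * t ^ b

section ExpWeight

variable {α b s t : ℝ}

theorem expWeight_nonneg (ht : 0 ≤ t) : 0 ≤ expWeight α b t := by
  unfold expWeight; positivity

theorem expWeight_pos (ht : 0 < t) : 0 < expWeight α b t := by
  unfold expWeight; positivity

theorem expWeight_le_expWeight (hα : 0 ≤ α) (hb : 0 ≤ b) (hs : 0 ≤ s) (hst : s ≤ t) :
    expWeight α b s ≤ expWeight α b t := by
  unfold expWeight
  gcongr

theorem expWeight_div (hs : 0 ≤ s) (ht : 0 < t) :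
    expWeight α b s / expWeight α b t = exp (α * (s - t)) * (s / t) ^ b := by
  rw [expWeight, expWeight, div_rpow hs ht.le, mul_sub, exp_sub]
  field_simp

theorem expWeight_add_le (hα : 0 ≤ α) (hb : 0 ≤ b) (hs : 1 ≤ s) (ht : 0 ≤ t) :
    expWeight α b (s + t) ≤ expWeight α b s * expWeight α b (1 + t) := by
  have hexp : exp (α * (s + t)) ≤ exp (α * s) * exp (α * (1 + t)) := by
    rw [← exp_add]; gcongr; linarith
  have hpow : (s + t) ^ b ≤ s ^ b * (1 + t) ^ b := by
    rw [← mul_rpow (by linarith) (by linarith)]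
    gcongr
    nlinarith
  calc expWeight α b (s + t) ≤ exp (α * s) * exp (α * (1 + t)) * (s ^ b * (1 + t) ^ b) := by
        unfold expWeight; gcongr
    _ = expWeight α b s * expWeight α b (1 + t) := by unfold expWeight; ring

theorem expWeight_one_add_le (hα : 0 ≤ α) (hb : 0 ≤ b) (ht : 0 ≤ t) :
    expWeight α b (1 + t) ≤ 2 ^ b * exp α * (exp α + expWeight α b t) := by
  have hw := expWeight_nonneg (α := α) (b := b) ht
  rcases le_total t 1 with ht1 | ht1
  · calc expWeight α b (1 + t) ≤ expWeight α b (1 + 1) :=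
          expWeight_le_expWeight hα hb (by linarith) (by linarith)
      _ = 2 ^ b * exp α * exp α := by
          rw [expWeight, mul_assoc, ← exp_add]; norm_num; ring_nf
      _ ≤ 2 ^ b * exp α * (exp α + expWeight α b t) := by gcongr; linarith
  · have hpow : (1 + t) ^ b ≤ 2 ^ b * t ^ b := by
      rw [← mul_rpow (by norm_num) ht]
      gcongr
      linarith
    calc expWeight α b (1 + t) = exp α * exp (α * t) * (1 + t) ^ b := by
          rw [expWeight, ← exp_add]; ring_nf
      _ ≤ exp α * exp (α * t) * (2 ^ b * t ^ b) := by gcongr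
      _ = 2 ^ b * exp α * expWeight α b t := by rw [expWeight]; ring
      _ ≤ 2 ^ b * exp α * (exp α + expWeight α b t) := by gcongr; linarith [exp_pos α]

theorem continuous_expWeight {α b : ℝ} (hb : 0 ≤ b) : Continuous (expWeight α b) :=
  (continuous_const.mul continuous_id).rexp.mul (continuous_rpow_const hb)

end ExpWeight

section Translates

variable {E : Type*} [NormedAddCommGroup E] {α b γ : ℝ} {g h : E → ℝ}

theorem abs_mul_expWeight_norm_add_le (hα : 0 ≤ α) (hb : 0 ≤ b) {R A M : ℝ}
    (hR : 1 ≤ R) (hfar : ∀ y, R ≤ ‖y‖ → |g y| * expWeight α b ‖y‖ ≤ A) {x u : E}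
    (hM : |g (x + u)| ≤ M) :
    |g (x + u)| * expWeight α b ‖u‖ ≤ max A (M * expWeight α b R) * expWeight α b (1 + ‖x‖) := by
  have hu : ‖u‖ ≤ ‖x + u‖ + ‖x‖ := by
    simpa using norm_sub_le (x + u) x
  have hw : 0 ≤ expWeight α b (1 + ‖x‖) := expWeight_nonneg (by positivity)
  rcases le_total R ‖x + u‖ with hy | hy
  · calc |g (x + u)| * expWeight α b ‖u‖
          ≤ |g (x + u)| * (expWeight α b ‖x + u‖ * expWeight α b (1 + ‖x‖)) := by
            gcongr
            exact (expWeight_le_expWeight hα hb (norm_nonneg _) hu).trans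
              (expWeight_add_le hα hb (hR.trans hy) (norm_nonneg _))
      _ ≤ A * expWeight α b (1 + ‖x‖) := by
            rw [← mul_assoc]; gcongr; exact hfar _ hy
      _ ≤ _ := by gcongr; exact le_max_left _ _
  · calc |g (x + u)| * expWeight α b ‖u‖
          ≤ M * (expWeight α b R * expWeight α b (1 + ‖x‖)) := by
            refine mul_le_mul hM ?_ (expWeight_nonneg (norm_nonneg _)) ((abs_nonneg _).trans hM)
            exact (expWeight_le_expWeight hα hb (norm_nonneg u) (by linarith : ‖u‖ ≤ R + ‖x‖)).trans
              (expWeight_add_le hα hb hR (norm_nonneg _))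
      _ ≤ _ := by rw [← mul_assoc]; gcongr; exact le_max_right _ _

theorem exists_abs_mul_expWeight_le_of_tendsto
    (hglim : Tendsto (fun y => g y * expWeight α b ‖y‖) (cobounded E) (𝓝 γ)) :
    ∃ R, 1 ≤ R ∧ ∀ y, R ≤ ‖y‖ → |g y| * expWeight α b ‖y‖ ≤ |γ| + 1 := by
  obtain ⟨R, -, hR⟩ := hasBasis_cobounded_norm.eventually_iff.1
    (hglim.abs.eventually (eventually_le_nhds (lt_add_one |γ|)))
  refine ⟨max R 1, le_max_right _ _, fun y hy => ?_⟩
  simpa [abs_mul, abs_of_nonneg (expWeight_nonneg (norm_nonneg y))]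
    using hR ((le_max_left _ _).trans hy)

variable [MeasurableSpace E] [BorelSpace E] {μ : Measure E}

theorem exists_forall_ae_abs_mul_expWeight_le [μ.IsAddRightInvariant] (hα : 0 ≤ α)
    (hb : 0 ≤ b) (hg : MemLp g ⊤ μ)
    (hglim : Tendsto (fun y => g y * expWeight α b ‖y‖) (cobounded E) (𝓝 γ)) :
    ∃ C, ∀ u : E, ∀ᵐ x ∂μ, |g (x + u)| * expWeight α b ‖u‖ ≤ C * expWeight α b (1 + ‖x‖) := by
  obtain ⟨R, hR, hfar⟩ := exists_abs_mul_expWeight_le_of_tendsto hglim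
  refine ⟨max (|γ| + 1) (lpNorm g ⊤ μ * expWeight α b R), fun u => ?_⟩
  filter_upwards [(measurePreserving_add_right μ u).quasiMeasurePreserving.tendsto_ae.eventually
    (ae_le_lpNorm_exponent_top hg)] with x hx
  exact abs_mul_expWeight_norm_add_le hα hb hR hfar hx

theorem integrable_abs_mul_expWeight_one_add (hα : 0 ≤ α) (hb : 0 ≤ b) (hh : Integrable h μ)
    (hhint : Integrable (fun x => |h x| * expWeight α b ‖x‖) μ) :
    Integrable (fun x => |h x| * expWeight α b (1 + ‖x‖)) μ := by
  refine Integrable.mono' ((hh.abs.const_mul (exp α)).add hhint |>.const_mul (2 ^ b * exp α))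
    (hh.abs.1.mul ((continuous_expWeight hb).comp
      (continuous_const.add continuous_norm)).aestronglyMeasurable)
    (ae_of_all _ fun x => ?_)
  have hw := expWeight_one_add_le hα hb (norm_nonneg x)
  rw [Real.norm_of_nonneg (mul_nonneg (abs_nonneg _) (expWeight_nonneg (by positivity)))]
  calc |h x| * expWeight α b (1 + ‖x‖)
      ≤ |h x| * (2 ^ b * exp α * (exp α + expWeight α b ‖x‖)) := by gcongr
    _ = 2 ^ b * exp α * (exp α * |h x| + |h x| * expWeight α b ‖x‖) := by ring

end Translates

section Asymptotics

variable {E : Type*} [NormedAddCommGroup E] [InnerProductSpace ℝ E] {α b γ : ℝ} {z : E}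

theorem tendsto_expWeight_norm_smul_div (hz : z ≠ 0) (x : E) :
    Tendsto (fun ρ : ℝ => expWeight α b ‖ρ • z‖ / expWeight α b ‖x + ρ • z‖) atTop
      (𝓝 (exp (-(α * ⟪x, z⟫ / ‖z‖)))) := by
  have hexp := ((tendsto_norm_add_smul_sub_norm_smul hz x).neg.const_mul α).rexp
  have hpow := (tendsto_norm_smul_div_norm_add_smul hz x).rpow_const (p := b) (Or.inl one_ne_zero)
  rw [one_rpow] at hpow
  convert (hexp.mul hpow).congr' ?_ using 2
  · ring_nf
  · filter_upwards [(tendsto_norm_add_smul_atTop hz x).eventually_gt_atTop 0] with ρ hρ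
    rw [expWeight_div (norm_nonneg _) hρ, neg_sub]

theorem tendsto_mul_expWeight_norm_smul
    {g : E → ℝ} (hglim : Tendsto (fun y => g y * expWeight α b ‖y‖) (cobounded E) (𝓝 γ))
    (hz : z ≠ 0) (x : E) :
    Tendsto (fun ρ : ℝ => g (x + ρ • z) * expWeight α b ‖ρ • z‖) atTop
      (𝓝 (γ * exp (-(α * ⟪x, z⟫ / ‖z‖)))) := by
  have hfar := tendsto_norm_add_smul_atTop hz x
  refine ((hglim.comp (tendsto_norm_atTop_iff_cobounded.1 hfar)).mul
    (tendsto_expWeight_norm_smul_div (b := b) hz x)).congr' ?_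
  filter_upwards [hfar.eventually_gt_atTop 0] with ρ hρ
  have := (expWeight_pos (α := α) (b := b) hρ).ne'
  simp only [Function.comp_apply]
  field_simp

variable [MeasurableSpace E] [BorelSpace E] {μ : Measure E} [μ.IsAddRightInvariant] {g h : E → ℝ}

theorem tendsto_integral_translate_mul_mul_expWeight (hα : 0 ≤ α) (hb : 0 ≤ b)
    (hg : MemLp g ⊤ μ) (hh : Integrable h μ)
    (hglim : Tendsto (fun y => g y * expWeight α b ‖y‖) (cobounded E) (𝓝 γ))
    (hhint : Integrable (fun x => |h x| * expWeight α b ‖x‖) μ) (hz : z ≠ 0) :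
    Tendsto (fun ρ : ℝ => (∫ x, g (x + ρ • z) * h x ∂μ) * expWeight α b ‖ρ • z‖) atTop
      (𝓝 (γ * ∫ x, h x * exp (-(α * ⟪x, z⟫ / ‖z‖)) ∂μ)) := by
  obtain ⟨C, hC⟩ := exists_forall_ae_abs_mul_expWeight_le hα hb hg hglim (μ := μ)
  have hmeas (ρ : ℝ) :
      AEStronglyMeasurable (fun x => g (x + ρ • z) * expWeight α b ‖ρ • z‖ * h x) μ :=
    ((hg.1.comp_quasiMeasurePreserving
      (measurePreserving_add_right μ (ρ • z)).quasiMeasurePreserving).mul_const _).mul hh.1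
  have hbound (ρ : ℝ) : ∀ᵐ x ∂μ, ‖g (x + ρ • z) * expWeight α b ‖ρ • z‖ * h x‖
      ≤ C * (|h x| * expWeight α b (1 + ‖x‖)) := by
    filter_upwards [hC (ρ • z)] with x hx
    calc ‖g (x + ρ • z) * expWeight α b ‖ρ • z‖ * h x‖
        = |g (x + ρ • z)| * expWeight α b ‖ρ • z‖ * |h x| := by
          simp only [norm_mul, Real.norm_eq_abs, abs_of_nonneg (expWeight_nonneg (norm_nonneg _))]
      _ ≤ C * expWeight α b (1 + ‖x‖) * |h x| := by gcongr
      _ = C * (|h x| * expWeight α b (1 + ‖x‖)) := by ring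
  have hlim := tendsto_integral_filter_of_dominated_convergence _
    (Eventually.of_forall hmeas) (Eventually.of_forall hbound)
    ((integrable_abs_mul_expWeight_one_add hα hb hh hhint).const_mul C)
    (ae_of_all _ fun x => (tendsto_mul_expWeight_norm_smul hglim hz x).mul_const (h x))
  have hintegral (ρ : ℝ) : ∫ x, g (x + ρ • z) * expWeight α b ‖ρ • z‖ * h x ∂μ
      = (∫ x, g (x + ρ • z) * h x ∂μ) * expWeight α b ‖ρ • z‖ := by
    rw [← integral_mul_const]; congr 1 with x; ring
  have hlimit : ∫ x, γ * exp (-(α * ⟪x, z⟫ / ‖z‖)) * h x ∂μ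
      = γ * ∫ x, h x * exp (-(α * ⟪x, z⟫ / ‖z‖)) ∂μ := by
    rw [← integral_const_mul]; congr 1 with x; ring
  simpa only [hintegral, hlimit] using hlim

end Asymptotics

theorem translated_integral_asymptotics (N : ℕ) (α b γ : ℝ) (hα : 0 ≤ α) (hb : 0 ≤ b)
    (g h : EuclideanSpace ℝ (Fin N) → ℝ)
    (hg : MemLp g ⊤) (hh : Integrable h)
    (hglim : Tendsto (fun x => g x * Real.exp (α * ‖x‖) * ‖x‖ ^ b)
      (Filter.cocompact (EuclideanSpace ℝ (Fin N))) (𝓝 γ))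
    (hhint : Integrable (fun x => |h x| * Real.exp (α * ‖x‖) * ‖x‖ ^ b)) :
    ∀ z : EuclideanSpace ℝ (Fin N), z ≠ 0 →
      Tendsto (fun ρ : ℝ =>
          (∫ x, g (x + ρ • z) * h x) * Real.exp (α * ‖ρ • z‖) * ‖ρ • z‖ ^ b)
        atTop
        (𝓝 (γ * ∫ x, h x * Real.exp (-(α * (inner ℝ x z : ℝ) / ‖z‖)))) := by
  intro z hz
  simp only [mul_assoc] at hglim hhint ⊢
  exact tendsto_integral_translate_mul_mul_expWeight hα hb hg hh
    (hglim.mono_left Metric.cobounded_le_cocompact) hhint hz
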